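/- Let G be a finite connected (q+1)-regular graph with ν vertices and m edges, let U⁺ be the positive support of its Grover matrix and A its adjacency matrix. Then for every complex number u, det(I_{2m} − uU⁺) = (1 − u²)^{m − ν} det((1 + qu²) I_ν − u A). -/

import Mathlib

open SimpleGraph Matrix

/-- The Grover matrix of a graph, indexed by darts (oriented arcs). -/
noncomputable def groverMatrix {V : Type*} [Fintype V] [DecidableEq V] (G : SimpleGraph V)
    [DecidableRel G.Adj] : Matrix G.Dart G.Dart ℝ :=
  fun e f =>
    if f = e.symm then 2 / (G.degree e.fst : ℝ) - 1
    else if f.snd = e.fst then 2 / (G.degree e.fst : ℝ)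
    else 0

/-- The positive support `U⁺` of the Grover matrix: the 0–1 matrix with a `1` exactly
where the Grover matrix has a positive entry. -/
noncomputable def groverPos {V : Type*} [Fintype V] [DecidableEq V] (G : SimpleGraph V)
    [DecidableRel G.Adj] : Matrix G.Dart G.Dart ℂ :=
  fun e f => if 0 < groverMatrix G e f then 1 else 0

namespace KS

variable {V : Type*} [Fintype V] [DecidableEq V] (G : SimpleGraph V) [DecidableRel G.Adj]

/-- Head-incidence matrix. -/
def S : Matrix G.Dart V ℂ := fun d v => if d.snd = v then 1 else 0

/-- Tail-incidence matrix. -/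
def T : Matrix G.Dart V ℂ := fun d v => if d.fst = v then 1 else 0

/-- The dart-reversal permutation matrix. -/
def J : Matrix G.Dart G.Dart ℂ := fun e f => if f = e.symm then 1 else 0

lemma T_mul_St_apply (e f : G.Dart) :
    (T G * (S G)ᵀ) e f = if f.snd = e.fst then 1 else 0 := by
  simp only [Matrix.mul_apply, T, S, transpose_apply, ite_mul, one_mul, zero_mul]
  rw [Finset.sum_ite_eq (Finset.univ) e.fst (fun v => if f.snd = v then (1:ℂ) else 0)]
  simp

lemma groverPos_eq (q : ℕ) (hq : 1 ≤ q) (hreg : G.IsRegularOfDegree (q + 1)) :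
    groverPos G = T G * (S G)ᵀ - J G := by
  ext e f
  have hdeg : (G.degree e.fst : ℝ) = (q : ℝ) + 1 := by rw [hreg e.fst]; push_cast; ring
  have hqpos : (0:ℝ) < (q:ℝ) + 1 := by positivity
  have h1R : (1:ℝ) ≤ (q:ℝ) := by exact_mod_cast hq
  have hnp : ¬ (0:ℝ) < 2 / ((q:ℝ)+1) - 1 := by
    rw [not_lt, sub_nonpos, div_le_one hqpos]; linarith
  have hp : (0:ℝ) < 2 / ((q:ℝ)+1) := by positivity
  simp only [groverPos, groverMatrix, Matrix.sub_apply, T_mul_St_apply, J, hdeg]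
  by_cases h1 : f = e.symm
  · subst h1
    simp [hnp, Dart.symm_toProd]
  · simp only [if_neg h1]
    by_cases h2 : f.snd = e.fst
    · simp [h2, hp]
    · simp [h2]

lemma J_mul_J : J G * J G = 1 := by
  ext e f
  simp only [Matrix.mul_apply, J, ite_mul, one_mul, zero_mul]
  rw [Finset.sum_ite_eq' (Finset.univ) e.symm (fun g => if f = g.symm then (1:ℂ) else 0)]
  simp [Matrix.one_apply, Dart.symm_symm, eq_comm]

lemma J_mul_T : J G * T G = S G := by
  ext e v
  simp only [Matrix.mul_apply, J, T, S, ite_mul, one_mul, zero_mul]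
  rw [Finset.sum_ite_eq' (Finset.univ) e.symm (fun g => if g.fst = v then (1:ℂ) else 0)]
  simp [Dart.symm_toProd]

lemma J_mul_S : J G * S G = T G := by
  ext e v
  simp only [Matrix.mul_apply, J, T, S, ite_mul, one_mul, zero_mul]
  rw [Finset.sum_ite_eq' (Finset.univ) e.symm (fun g => if g.snd = v then (1:ℂ) else 0)]
  simp [Dart.symm_toProd]

lemma St_mul_T : (S G)ᵀ * T G = G.adjMatrix ℂ := by
  ext v w
  simp only [Matrix.mul_apply, S, T, transpose_apply, ite_mul, one_mul, zero_mul,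
    adjMatrix_apply]
  by_cases h : G.Adj w v
  · have : ∀ d : G.Dart, (if d.snd = v then (if d.fst = w then (1:ℂ) else 0) else 0)
        = if d = ⟨(w, v), h⟩ then 1 else 0 := by
      intro d
      by_cases h1 : d.snd = v <;> by_cases h2 : d.fst = w <;>
        simp_all [Dart.ext_iff, Prod.ext_iff] <;> tauto
    rw [Finset.sum_congr rfl (fun d _ => this d),
      Finset.sum_ite_eq' Finset.univ (⟨(w, v), h⟩ : G.Dart) (fun _ => (1:ℂ))]
    simp [if_pos (G.adj_symm h)]
  · rw [if_neg (fun hadj => h (G.adj_symm hadj))]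
    apply Finset.sum_eq_zero
    intro d _
    by_cases h1 : d.snd = v <;> by_cases h2 : d.fst = w <;> simp_all
    exact h (h2 ▸ h1 ▸ d.adj)

lemma card_snd_fiber (v : V) :
    ({d : G.Dart | d.snd = v} : Finset _).card = G.degree v := by
  rw [← G.dart_fst_fiber_card_eq_degree v]
  apply Finset.card_bij (fun d _ => d.symm)
  · intro d hd
    simp only [Finset.mem_filter, Finset.mem_univ, true_and] at hd ⊢
    simp [hd]
  · intro d₁ _ d₂ _ h
    simpa using congrArg Dart.symm h
  · intro d hd
    simp only [Finset.mem_filter, Finset.mem_univ, true_and] at hd ⊢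
    exact ⟨d.symm, by simp [hd], by simp⟩

lemma St_mul_S (q : ℕ) (hreg : G.IsRegularOfDegree (q + 1)) :
    (S G)ᵀ * S G = ((q : ℂ) + 1) • 1 := by
  ext v w
  simp only [Matrix.mul_apply, S, transpose_apply, ite_mul, one_mul, zero_mul,
    Matrix.smul_apply, Matrix.one_apply]
  by_cases h : v = w
  · subst h
    simp only [if_pos rfl, smul_eq_mul, mul_one]
    have : ∀ d : G.Dart, (if d.snd = v then (if d.snd = v then (1:ℂ) else 0) else 0)
        = if d.snd = v then 1 else 0 := by intro d; by_cases h1 : d.snd = v <;> simp [h1]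
    rw [Finset.sum_congr rfl (fun d _ => this d), Finset.sum_boole]
    have := card_snd_fiber G v
    rw [hreg v] at this
    rw [show ({d : G.Dart | d.snd = v} : Finset _) = Finset.univ.filter (fun d => d.snd = v) from rfl] at this
    rw [this]
    push_cast
    ring
  · rw [if_neg h, smul_zero]
    apply Finset.sum_eq_zero
    intro d _
    by_cases h1 : d.snd = v <;> by_cases h2 : d.snd = w <;> simp_all

lemma det_one_add_smul_J (u : ℂ) :
    ((1 : Matrix G.Dart G.Dart ℂ) + u • J G).det
      = (1 - u ^ 2) ^ G.edgeFinset.card := by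
  classical
  set r : V ≃ Fin (Fintype.card V) := Fintype.equivFin V with hr
  set pos : G.Dart → Prop := fun d => r d.fst < r d.snd with hpos
  have hsymm : ∀ d : G.Dart, pos d.symm ↔ ¬ pos d := by
    intro d
    have hne : r d.snd ≠ r d.fst := fun h => d.adj.ne (r.injective h.symm)
    have h1 : d.symm.fst = d.snd := rfl
    have h2 : d.symm.snd = d.fst := rfl
    simp only [hpos, h1, h2, not_lt]
    exact ⟨le_of_lt, fun h => h.lt_of_ne hne⟩
  let e : G.Dart ≃ {d : G.Dart // pos d} ⊕ {d : G.Dart // pos d} :=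
    { toFun := fun d => if h : pos d then .inl ⟨d, h⟩
        else .inr ⟨d.symm, (hsymm d).2 h⟩
      invFun := fun x => Sum.elim Subtype.val (fun p => p.val.symm) x
      left_inv := fun d => by
        by_cases h : pos d <;> simp [h, Dart.symm_symm]
      right_inv := fun x => by
        rcases x with p | p
        · simp [p.prop]
        · have hnp : ¬ pos p.val.symm := by
            rw [hsymm p.val]; simp [p.prop]
          simp [hnp, Dart.symm_symm] }
  rw [← Matrix.det_reindex_self e (1 + u • J G)]
  have hre : Matrix.reindex e e ((1 : Matrix G.Dart G.Dart ℂ) + u • J G)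
      = Matrix.fromBlocks 1 (u • 1) (u • 1) (1 : Matrix {d : G.Dart // pos d} {d : G.Dart // pos d} ℂ) := by
    have hJ : ∀ a b : G.Dart, J G a b = if b = a.symm then 1 else 0 := fun _ _ => rfl
    have hes : ∀ x, e.symm x = Sum.elim Subtype.val (fun p : {d : G.Dart // pos d} => p.val.symm) x :=
      fun _ => rfl
    ext i j
    rcases i with p | p <;> rcases j with p' | p' <;>
      simp only [Matrix.reindex_apply, Matrix.submatrix_apply, hes, Sum.elim_inl, Sum.elim_inr,
        Matrix.add_apply, Matrix.smul_apply, hJ, Matrix.one_apply, Matrix.fromBlocks_apply₁₁,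
        Matrix.fromBlocks_apply₁₂, Matrix.fromBlocks_apply₂₁, Matrix.fromBlocks_apply₂₂,
        smul_eq_mul]
    · have hne : ¬ (p'.val = p.val.symm) := by
        intro h
        have : pos p.val.symm := h ▸ p'.prop
        exact ((hsymm p.val).1 this) p.prop
      rw [if_neg hne, mul_zero, add_zero]
      by_cases h : p = p'
      · subst h; simp
      · rw [if_neg (fun hv => h (Subtype.ext hv)), if_neg h]
    · have hne : ¬ (p.val = p'.val.symm) := by
        intro h
        have : pos p'.val.symm := h ▸ p.prop
        exact ((hsymm p'.val).1 this) p'.prop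
      rw [if_neg hne]
      have : (p'.val.symm = p.val.symm) ↔ (p = p') := by
        constructor
        · intro h
          have h2 : p'.val = p.val := by simpa using congrArg Dart.symm h
          exact (Subtype.ext h2).symm
        · intro h; rw [h]
      by_cases h : p = p'
      · subst h; simp
      · rw [if_neg (fun hv => h (this.1 hv)), if_neg h]
        simp
    · have hne : ¬ (p.val.symm = p'.val) := by
        intro h
        have : pos p.val.symm := h ▸ p'.prop
        exact ((hsymm p.val).1 this) p.prop
      rw [if_neg hne]
      have hiff : (p'.val = p.val.symm.symm) ↔ (p = p') := by
        rw [Dart.symm_symm]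
        exact ⟨fun h => Subtype.ext h.symm, fun h => by rw [h]⟩
      by_cases h : p = p'
      · subst h; simp
      · rw [if_neg (fun hv => h (hiff.1 hv)), if_neg h]
        simp
    · have hne : ¬ (p'.val.symm = p.val.symm.symm) := by
        rw [Dart.symm_symm]
        intro h
        have : pos p'.val.symm := h.symm ▸ p.prop
        exact ((hsymm p'.val).1 this) p'.prop
      rw [if_neg hne, mul_zero, add_zero]
      have hiff : (p.val.symm = p'.val.symm) ↔ (p = p') := by
        constructor
        · intro h
          have h2 : p.val = p'.val := by simpa using congrArg Dart.symm h
          exact Subtype.ext h2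
        · intro h; rw [h]
      by_cases h : p = p'
      · subst h; simp
      · rw [if_neg (fun hv => h (hiff.1 hv)), if_neg h]
  rw [hre, Matrix.det_fromBlocks_one₁₁]
  have hblock : (1 : Matrix {d : G.Dart // pos d} {d : G.Dart // pos d} ℂ) - (u • 1) * (u • 1)
      = (1 - u ^ 2) • 1 := by
    rw [Matrix.smul_mul, Matrix.mul_smul, Matrix.one_mul, smul_smul, sub_smul, one_smul, sq]
  rw [hblock, Matrix.det_smul, Matrix.det_one, mul_one]
  congr 1
  have hcard : Fintype.card G.Dart = 2 * Fintype.card {d : G.Dart // pos d} := by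
    rw [Fintype.card_congr e, Fintype.card_sum]
    ring
  have h2m := G.dart_card_eq_twice_card_edges
  omega

lemma card_le (q : ℕ) (hq : 1 ≤ q) (hreg : G.IsRegularOfDegree (q + 1)) :
    Fintype.card V ≤ G.edgeFinset.card := by
  have h := G.sum_degrees_eq_twice_card_edges
  rw [Finset.sum_congr rfl (fun v _ => hreg v), Finset.sum_const, Finset.card_univ,
    smul_eq_mul] at h
  have h2 : 2 * Fintype.card V ≤ Fintype.card V * (q + 1) := by
    nlinarith
  omega

lemma pointwise (q : ℕ) (hq : 1 ≤ q) (hreg : G.IsRegularOfDegree (q + 1))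
    (u : ℂ) (hu2 : u ^ 2 ≠ 1) :
    (1 - u • groverPos G).det =
      (1 - u ^ 2) ^ (G.edgeFinset.card - Fintype.card V) *
        ((1 + (q : ℂ) * u ^ 2) • (1 : Matrix V V ℂ) - u • G.adjMatrix ℂ).det := by
  have h1u : (1 : ℂ) - u ^ 2 ≠ 0 := sub_ne_zero.mpr (Ne.symm hu2)
  set c : ℂ := u / (1 - u ^ 2) with hc
  have hcu : c * (1 - u ^ 2) = u := div_mul_cancel₀ u h1u
  have hmid : ((1 : Matrix G.Dart G.Dart ℂ) + u • J G) * (T G - u • S G)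
      = (1 - u ^ 2) • T G := by
    rw [Matrix.add_mul, Matrix.one_mul, Matrix.smul_mul, Matrix.mul_sub, J_mul_T,
      Matrix.mul_smul, J_mul_S]
    module
  have hfact : (1 : Matrix G.Dart G.Dart ℂ) - u • groverPos G
      = ((1 : Matrix G.Dart G.Dart ℂ) + u • J G)
        * (1 - (c • (T G - u • S G)) * (S G)ᵀ) := by
    rw [groverPos_eq G q hq hreg]
    rw [Matrix.mul_sub, Matrix.mul_one, ← Matrix.mul_assoc, Matrix.mul_smul, hmid,
      smul_smul, hcu, Matrix.smul_mul]
    module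
  rw [hfact, Matrix.det_mul, det_one_add_smul_J, Matrix.det_one_sub_mul_comm]
  have hkey : (1 : Matrix V V ℂ) - (S G)ᵀ * (c • (T G - u • S G))
      = ((1 - u ^ 2)⁻¹) • ((1 + (q : ℂ) * u ^ 2) • (1 : Matrix V V ℂ) - u • G.adjMatrix ℂ) := by
    rw [Matrix.mul_smul, Matrix.mul_sub, St_mul_T, Matrix.mul_smul, St_mul_S G q hreg]
    match_scalars
    · linear_combination (-1 : ℂ) * mul_inv_cancel₀ h1u
    · ring
  rw [hkey, Matrix.det_smul, ← mul_assoc, inv_pow,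
    ← pow_sub₀ _ h1u (card_le G q hq hreg)]

end KS

/-- Konno–Sato theorem, Eq. (2): for a connected `(q+1)`-regular graph `G` with `ν` vertices,
`m` edges and adjacency matrix `A`,
`det(I - uU⁺) = (1-u²)^{m-ν} det((1+qu²)I - uA)` for every complex `u`. -/
theorem stmt_4 {V : Type*} [Fintype V] [DecidableEq V] (G : SimpleGraph V)
    [DecidableRel G.Adj] (q : ℕ) (hq : 1 ≤ q) (hconn : G.Connected)
    (hreg : G.IsRegularOfDegree (q + 1))
    (ν m : ℕ) (hν : ν = Fintype.card V) (hm : m = G.edgeFinset.card) :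
    ∀ u : ℂ,
      (1 - u • groverPos G).det =
        (1 - u ^ 2) ^ (m - ν) *
          ((1 + (q : ℂ) * u ^ 2) • (1 : Matrix V V ℂ) - u • G.adjMatrix ℂ).det := by
  intro u
  classical
  subst hν hm
  set P : Polynomial ℂ :=
    ((1 : Matrix G.Dart G.Dart (Polynomial ℂ))
      - (Polynomial.X : Polynomial ℂ) • (groverPos G).map Polynomial.C).det with hP
  set Q : Polynomial ℂ :=
    (1 - Polynomial.X ^ 2) ^ (G.edgeFinset.card - Fintype.card V) *
      ((1 + Polynomial.C (q : ℂ) * Polynomial.X ^ 2) • (1 : Matrix V V (Polynomial ℂ))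
        - (Polynomial.X : Polynomial ℂ) • (G.adjMatrix ℂ).map Polynomial.C).det with hQ
  have hevalP : ∀ w : ℂ, Polynomial.eval w P = (1 - w • groverPos G).det := by
    intro w
    rw [hP, ← Polynomial.coe_evalRingHom, RingHom.map_det]
    congr 1
    ext i j
    simp only [RingHom.mapMatrix_apply, Polynomial.coe_evalRingHom, Matrix.map_apply, Matrix.sub_apply, Matrix.smul_apply, Matrix.one_apply,
      smul_eq_mul, Polynomial.eval_sub, Polynomial.eval_mul, Polynomial.eval_X,
      Polynomial.eval_C, apply_ite (Polynomial.eval w), Polynomial.eval_one,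
      Polynomial.eval_zero]
  have hevalQ : ∀ w : ℂ, Polynomial.eval w Q =
      (1 - w ^ 2) ^ (G.edgeFinset.card - Fintype.card V) *
        ((1 + (q : ℂ) * w ^ 2) • (1 : Matrix V V ℂ) - w • G.adjMatrix ℂ).det := by
    intro w
    rw [hQ, Polynomial.eval_mul, Polynomial.eval_pow, Polynomial.eval_sub,
      Polynomial.eval_pow, Polynomial.eval_one, Polynomial.eval_X]
    congr 1
    rw [← Polynomial.coe_evalRingHom, RingHom.map_det]
    congr 1
    ext i j
    simp only [RingHom.mapMatrix_apply, Polynomial.coe_evalRingHom, Matrix.map_apply, Matrix.sub_apply, Matrix.smul_apply, Matrix.add_apply,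
      Matrix.one_apply, smul_eq_mul, Polynomial.eval_sub, Polynomial.eval_mul,
      Polynomial.eval_add, Polynomial.eval_pow, Polynomial.eval_X, Polynomial.eval_C,
      apply_ite (Polynomial.eval w), Polynomial.eval_one, Polynomial.eval_zero]
  have hfin : ({w : ℂ | w ^ 2 = 1}).Finite := by
    apply Set.Finite.subset ((Set.finite_singleton (-1 : ℂ)).insert 1)
    intro w hw
    have hw' : w ^ 2 = 1 := hw
    have h0 : (w - 1) * (w + 1) = 0 := by linear_combination hw'
    rcases mul_eq_zero.mp h0 with h | h
    · exact Set.mem_insert_iff.mpr (Or.inl (sub_eq_zero.mp h))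
    · exact Set.mem_insert_iff.mpr
        (Or.inr (Set.mem_singleton_iff.mpr (eq_neg_of_add_eq_zero_left h)))
  have hPQ : P = Q := by
    apply Polynomial.eq_of_infinite_eval_eq
    apply Set.Infinite.mono _ hfin.infinite_compl
    intro w hw
    have hw2 : w ^ 2 ≠ 1 := hw
    simp only [Set.mem_setOf_eq]
    rw [hevalP w, hevalQ w]
    exact KS.pointwise G q hq hreg w hw2
  rw [← hevalP u, hPQ, hevalQ u]
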